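/- In a residuated lattice, for a filter F, the α-filter α(F) generated by F is proper (≠ A) if and only if F contains no dense element. -/

import Mathlib

/-- A (bounded, integral, commutative) residuated lattice. -/
class ResLattice (A : Type*) extends Lattice A, CommMonoid A, OrderBot A where
  himp : A → A → A
  adjunction : ∀ x y z : A, x * y ≤ z ↔ x ≤ himp y z
  le_one : ∀ x : A, x ≤ 1

variable {A : Type*} [ResLattice A]

/-- Coannihilator of a subset: `X^⊥ = {a | a ⊔ x = 1 for all x ∈ X}`. -/
def Coann (X : Set A) : Set A := {a | ∀ x ∈ X, a ⊔ x = 1}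

/-- Coannulet of an element: `x^⊥`. -/
def rperp (x : A) : Set A := Coann {x}

/-- The principal filter generated by `x`. -/
def PFil (x : A) : Set A := {a | ∃ n : ℕ, 0 < n ∧ x ^ n ≤ a}

/-- Filters of a residuated lattice. -/
def IsRLFilter (F : Set A) : Prop :=
  F.Nonempty ∧ (∀ x ∈ F, ∀ y ∈ F, x * y ∈ F) ∧ (∀ x ∈ F, ∀ y : A, x ⊔ y ∈ F)

/-- Prime filters. -/
def IsRLPrime (P : Set A) : Prop :=
  IsRLFilter P ∧ P ≠ Set.univ ∧ ∀ x y : A, x ⊔ y ∈ P → x ∈ P ∨ y ∈ P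

/-- Minimal prime filters. -/
def IsRLMinPrime (P : Set A) : Prop :=
  IsRLPrime P ∧ ∀ Q : Set A, IsRLPrime Q → Q ⊆ P → Q = P

/-- Quasicomplemented residuated lattice. -/
def Quasicomplemented (A : Type*) [ResLattice A] : Prop :=
  ∀ x : A, ∃ y : A, Coann (rperp x) = rperp y

/-- α-filters. -/
def IsAlphaFilter (F : Set A) : Prop :=
  IsRLFilter F ∧ ∀ x ∈ F, Coann (rperp x) ⊆ F

/-- The α-filter generated by a subset. -/
def alphaGen (X : Set A) : Set A := ⋂₀ {G : Set A | IsAlphaFilter G ∧ X ⊆ G}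

namespace ResLattice

lemma mul_le_mul_of_le_right {a b : A} (c : A) (h : a ≤ b) : a * c ≤ b * c :=
  (adjunction a c (b * c)).mpr (h.trans ((adjunction b c (b * c)).mp le_rfl))

lemma mul_le_left (a b : A) : a * b ≤ a := by
  simpa only [mul_comm b a, one_mul] using mul_le_mul_of_le_right a (le_one b)

lemma mul_le_right (a b : A) : a * b ≤ b := by
  simpa only [mul_comm a b] using mul_le_left b a

lemma sup_mul_le_iff {a b c d : A} : (a ⊔ b) * c ≤ d ↔ a * c ≤ d ∧ b * c ≤ d := by
  simp only [adjunction, sup_le_iff]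

lemma sup_mul_sup_le (a b c : A) : (a ⊔ b) * (a ⊔ c) ≤ a ⊔ b * c := by
  refine sup_mul_le_iff.mpr ⟨(mul_le_left a _).trans le_sup_left, ?_⟩
  rw [mul_comm]
  exact sup_mul_le_iff.mpr ⟨(mul_le_left a b).trans le_sup_left, mul_comm c b ▸ le_sup_right⟩

lemma sup_mul_eq_one {a b c : A} (hb : a ⊔ b = 1) (hc : a ⊔ c = 1) : a ⊔ b * c = 1 :=
  le_antisymm (le_one _) (by simpa only [hb, hc, one_mul] using sup_mul_sup_le a b c)

lemma sup_eq_one_of_le {a b c : A} (h : a ⊔ b = 1) (hbc : b ≤ c) : a ⊔ c = 1 :=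
  le_antisymm (le_one _) (h ▸ sup_le_sup_left hbc a)

end ResLattice

open ResLattice

lemma IsRLFilter.mem_of_le {F : Set A} (hF : IsRLFilter F) {x y : A} (hx : x ∈ F) (hxy : x ≤ y) :
    y ∈ F :=
  sup_eq_right.mpr hxy ▸ hF.2.2 x hx y

lemma IsRLFilter.eq_univ_iff_bot_mem {F : Set A} (hF : IsRLFilter F) : F = Set.univ ↔ ⊥ ∈ F :=
  ⟨fun h => h ▸ Set.mem_univ _,
    fun h => Set.eq_univ_of_forall fun _ => hF.mem_of_le h bot_le⟩

lemma mem_rperp {a x : A} : a ∈ rperp x ↔ a ⊔ x = 1 := by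
  simp [rperp, Coann]

lemma one_mem_rperp (x : A) : (1 : A) ∈ rperp x :=
  mem_rperp.mpr (sup_eq_left.mpr (le_one x))

lemma rperp_mono {x y : A} (h : x ≤ y) : rperp x ⊆ rperp y :=
  fun _ ha => mem_rperp.mpr (sup_eq_one_of_le (mem_rperp.mp ha) h)

lemma coann_anti {X Y : Set A} (h : X ⊆ Y) : Coann Y ⊆ Coann X :=
  fun _ ha x hx => ha x (h hx)

lemma self_mem_coann_rperp (x : A) : x ∈ Coann (rperp x) :=
  fun _ hy => sup_comm x _ ▸ mem_rperp.mp hy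

lemma mem_coann_of_le {X : Set A} {a b : A} (ha : a ∈ Coann X) (hab : a ≤ b) : b ∈ Coann X :=
  fun x hx => sup_comm x b ▸ sup_eq_one_of_le (sup_comm a x ▸ ha x hx) hab

lemma mul_mem_coann {X : Set A} {a b : A} (ha : a ∈ Coann X) (hb : b ∈ Coann X) :
    a * b ∈ Coann X :=
  fun x hx => sup_comm x _ ▸ sup_mul_eq_one (sup_comm a x ▸ ha x hx) (sup_comm b x ▸ hb x hx)

lemma coann_rperp_subset_of_mem {a x : A} (ha : a ∈ Coann (rperp x)) :
    Coann (rperp a) ⊆ Coann (rperp x) :=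
  coann_anti fun c hc => mem_rperp.mpr (sup_comm a c ▸ ha c hc)

lemma bot_mem_coann_rperp_iff {x : A} : ⊥ ∈ Coann (rperp x) ↔ rperp x = {1} := by
  simp only [Coann, bot_sup_eq, Set.mem_ofPred_eq, Set.eq_singleton_iff_unique_mem]
  exact ⟨fun h => ⟨one_mem_rperp x, h⟩, And.right⟩

/-- The paper's description `⋃_{x ∈ X} x^⊥⊥` of `α(X)`. -/
def alphaClosure (X : Set A) : Set A := {a | ∃ x ∈ X, a ∈ Coann (rperp x)}

lemma subset_alphaClosure (X : Set A) : X ⊆ alphaClosure X :=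
  fun x hx => ⟨x, hx, self_mem_coann_rperp x⟩

lemma IsRLFilter.isAlphaFilter_alphaClosure {F : Set A} (hF : IsRLFilter F) :
    IsAlphaFilter (alphaClosure F) := by
  obtain ⟨⟨x₀, hx₀⟩, hmul, _⟩ := hF
  refine ⟨⟨⟨x₀, subset_alphaClosure F hx₀⟩, ?_, ?_⟩, ?_⟩
  · rintro a ⟨x, hx, ha⟩ b ⟨y, hy, hb⟩
    exact ⟨x * y, hmul x hx y hy,
      mul_mem_coann (coann_anti (rperp_mono (mul_le_left x y)) ha)
        (coann_anti (rperp_mono (mul_le_right x y)) hb)⟩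
  · rintro a ⟨x, hx, ha⟩ y
    exact ⟨x, hx, mem_coann_of_le ha le_sup_left⟩
  · rintro a ⟨x, hx, ha⟩
    exact fun b hb => ⟨x, hx, coann_rperp_subset_of_mem ha hb⟩

lemma IsRLFilter.alphaGen_eq_alphaClosure {F : Set A} (hF : IsRLFilter F) :
    alphaGen F = alphaClosure F := by
  refine Set.Subset.antisymm
    (Set.sInter_subset_of_mem (t := alphaClosure F)
      ⟨hF.isAlphaFilter_alphaClosure, subset_alphaClosure F⟩) ?_
  rintro a ⟨x, hx, ha⟩
  exact Set.mem_sInter.mpr fun G ⟨hG, hFG⟩ => hG.2 x (hFG hx) ha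

theorem stmt18 (F : Set A) (hF : IsRLFilter F) :
    alphaGen F ≠ Set.univ ↔ ¬ ∃ d ∈ F, rperp d = {1} := by
  rw [ne_eq, not_iff_not, hF.alphaGen_eq_alphaClosure,
    hF.isAlphaFilter_alphaClosure.1.eq_univ_iff_bot_mem]
  simp only [alphaClosure, Set.mem_ofPred_eq, bot_mem_coann_rperp_iff]
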